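/- arXiv:2006.11936 — 5 statements merged into one kernel-verified Lean document; each statement's English description precedes it below -/
import Mathlib

section
/- Let $n \geq 1$, let $\lambda_1, \dots, \lambda_n \in \mathbb{C}$ be pairwise distinct, let $X = \mathrm{diag}(\lambda_1, \dots, \lambda_n)$, and let $Y$ be an $n \times n$ complex matrix with $\mathrm{rank}([X,Y] + \mathrm{id}) = 1$. Then there exists an invertible diagonal matrix $D$ such that $(D Y D^{-1})_{ij} = (\lambda_i - \lambda_j)^{-1}$ for all $i \neq j$. -/
/-!
Write `M = [X, Y] + id`. Its `(i, j)` entry is `(λᵢ - λⱼ) Yᵢⱼ + δᵢⱼ`, and having rank one it is an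
outer product `M = u vᵀ`. The diagonal gives `uᵢ vᵢ = 1`, so every `vᵢ` is nonzero, and off the
diagonal `Yᵢⱼ = uᵢ vⱼ / (λᵢ - λⱼ)`. Conjugating by `D = diag(v)` multiplies `Yᵢⱼ` by `vᵢ / vⱼ`,
which turns `uᵢ vⱼ` into `uᵢ vᵢ = 1`.
-/

namespace Matrix

variable {m n K : Type*}

theorem exists_eq_vecMulVec_of_rank_le_one [Field K] [Fintype n] [DecidableEq n]
    {A : Matrix m n K} (hA : A.rank ≤ 1) : ∃ u v, A = vecMulVec u v := by
  obtain ⟨u, hu⟩ := finrank_le_one_iff.mp hA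
  have hcol (j : n) : ∃ c : K, c • (u : m → K) = A.col j := by
    obtain ⟨c, hc⟩ := hu ⟨A.col j, Pi.single j 1, mulVec_single_one A j⟩
    exact ⟨c, congrArg Subtype.val hc⟩
  choose v hv using hcol
  refine ⟨u.1, v, ext fun i j => ?_⟩
  rw [vecMulVec_apply, mul_comm, ← col_apply A j i, ← hv j, Pi.smul_apply, smul_eq_mul]

theorem diagonal_mul_sub_mul_diagonal_apply [CommRing K] [Fintype n] [DecidableEq n]
    (l : n → K) (Y : Matrix n n K) (i j : n) :
    (diagonal l * Y - Y * diagonal l) i j = (l i - l j) * Y i j := by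
  rw [sub_apply, diagonal_mul, mul_diagonal, sub_mul, mul_comm (Y i j)]

theorem diagonal_mul_mul_inv_diagonal_apply [Field K] [Fintype n] [DecidableEq n]
    {d : n → K} (hd : ∀ i, d i ≠ 0) (Y : Matrix n n K) (i j : n) :
    (diagonal d * Y * (diagonal d)⁻¹) i j = d i * Y i j / d j := by
  have hinv : (diagonal d)⁻¹ = diagonal d⁻¹ :=
    inv_eq_right_inv <| by
      rw [diagonal_mul_diagonal, ← diagonal_one]
      exact congrArg diagonal (funext fun i => mul_inv_cancel₀ (hd i))
  rw [hinv, mul_diagonal, diagonal_mul, Pi.inv_apply, div_eq_mul_inv]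

end Matrix

open Matrix

theorem offdiagonal_normalization_by_diagonal_conjugation_general
    {n : ℕ} (l : Fin n → ℂ) (hl : Function.Injective l)
    (Y : Matrix (Fin n) (Fin n) ℂ)
    (h : ((Matrix.diagonal l) * Y - Y * (Matrix.diagonal l) + 1).rank = 1) :
    ∃ d : Fin n → ℂ, (∀ i, d i ≠ 0) ∧
      ∀ i j, i ≠ j →
        ((Matrix.diagonal d) * Y * (Matrix.diagonal d)⁻¹) i j = (l i - l j)⁻¹ := by
  obtain ⟨u, v, huv⟩ := exists_eq_vecMulVec_of_rank_le_one h.le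
  have hentry (i j : Fin n) :
      (l i - l j) * Y i j + (1 : Matrix (Fin n) (Fin n) ℂ) i j = u i * v j := by
    rw [← diagonal_mul_sub_mul_diagonal_apply, ← Matrix.add_apply, huv, vecMulVec_apply]
  have hdiag (i : Fin n) : u i * v i = 1 := by simpa using (hentry i i).symm
  have hv (i : Fin n) : v i ≠ 0 := right_ne_zero_of_mul_eq_one (hdiag i)
  refine ⟨v, hv, fun i j hij => ?_⟩
  have hY : (l i - l j) * Y i j = u i * v j := by simpa [one_apply_ne hij] using hentry i j
  rw [diagonal_mul_mul_inv_diagonal_apply hv]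
  field_simp [hv j, sub_ne_zero.mpr (hl.ne hij)]
  linear_combination v i * hY + v j * hdiag i

theorem offdiagonal_normalization_by_diagonal_conjugation
    {n : ℕ} (hn : 1 ≤ n) (l : Fin n → ℂ) (hl : Function.Injective l)
    (Y : Matrix (Fin n) (Fin n) ℂ)
    (h : ((Matrix.diagonal l) * Y - Y * (Matrix.diagonal l) + 1).rank = 1) :
    ∃ d : Fin n → ℂ, (∀ i, d i ≠ 0) ∧
      ∀ i j, i ≠ j →
        ((Matrix.diagonal d) * Y * (Matrix.diagonal d)⁻¹) i j = (l i - l j)⁻¹ :=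
  offdiagonal_normalization_by_diagonal_conjugation_general l hl Y h
end

section
/- Let $\lambda, \varepsilon \in \mathbb{C}$, let $Y = \begin{pmatrix} \lambda & 1 \\ 0 & \lambda + \varepsilon \end{pmatrix}$, and let $X = \begin{pmatrix} x_{11} & x_{12} \\ x_{21} & x_{22} \end{pmatrix}$ be any $2 \times 2$ complex matrix. Then $\mathrm{rank}([X,Y] + \mathrm{id}) = 1$ if and only if $\varepsilon^2 x_{21} x_{12} - \varepsilon x_{21}(x_{22} - x_{11}) + 1 - x_{21}^2 = 0$. -/
open Matrix

lemma rank_eq_one_iff_2x2 (M : Matrix (Fin 2) (Fin 2) ℂ) :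
    M.rank = 1 ↔ M.det = 0 ∧ M ≠ 0 := by
  constructor
  · intro h
    refine ⟨?_, ?_⟩
    · by_contra hd
      have : M.rank = 2 := by
        have := Matrix.rank_of_isUnit M ((Matrix.isUnit_iff_isUnit_det M).2 (isUnit_iff_ne_zero.2 hd))
        simpa using this
      omega
    · rintro rfl
      simp [Matrix.rank_zero] at h
  · rintro ⟨hd, hM⟩
    -- rank ≤ 1
    have hker : ∃ v ≠ 0, M.mulVec v = 0 := (Matrix.exists_mulVec_eq_zero_iff).2 hd
    obtain ⟨v, hv, hv0⟩ := hker
    have hkerpos : 0 < Module.finrank ℂ (LinearMap.ker M.mulVecLin) := by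
      rw [Module.finrank_pos_iff]
      refine nontrivial_of_ne ⟨v, by simpa using hv0⟩ 0 ?_
      intro h
      exact hv (by simpa [Submodule.mk_eq_zero] using h)
    have hsum := LinearMap.finrank_range_add_finrank_ker M.mulVecLin
    have hdim : Module.finrank ℂ (Fin 2 → ℂ) = 2 := by simp
    have hrank : M.rank = Module.finrank ℂ (LinearMap.range M.mulVecLin) := rfl
    have hle : M.rank ≤ 1 := by omega
    -- rank ≥ 1
    have hpos : 0 < M.rank := by
      rw [hrank, Module.finrank_pos_iff]
      have : M.mulVecLin ≠ 0 := by
        intro h0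
        apply hM
        have := congrArg Matrix.mulVecLin (rfl : M = M)
        ext i j
        have := congrFun (congrArg DFunLike.coe h0) (Pi.single j 1)
        simp [Matrix.mulVecLin] at this
        have := congrFun this i
        simpa [Matrix.mulVec_single] using this
      obtain ⟨w, hw⟩ : ∃ w, M.mulVecLin w ≠ 0 := by
        by_contra hc
        push_neg at hc
        exact this (LinearMap.ext fun w => hc w)
      refine nontrivial_of_ne ⟨M.mulVecLin w, ⟨w, rfl⟩⟩ 0 ?_
      intro h
      exact hw (by simpa [Submodule.mk_eq_zero] using h)
    omega

theorem rank_one_condition_explicit_equation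
    (l e x11 x12 x21 x22 : ℂ) (Y X : Matrix (Fin 2) (Fin 2) ℂ)
    (hY : Y = !![l, 1; 0, l + e]) (hX : X = !![x11, x12; x21, x22]) :
    (X * Y - Y * X + 1).rank = 1 ↔
      e ^ 2 * x21 * x12 - e * x21 * (x22 - x11) + 1 - x21 ^ 2 = 0 := by
  subst hY hX
  have hM : (!![x11, x12; x21, x22] * !![l, 1; 0, l + e] -
      !![l, 1; 0, l + e] * !![x11, x12; x21, x22] + 1 : Matrix (Fin 2) (Fin 2) ℂ) =
      !![1 - x21, x11 + e * x12 - x22; -(e * x21), 1 + x21] := by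
    ext i j
    fin_cases i <;> fin_cases j <;>
      simp [Matrix.mul_apply, Fin.sum_univ_two, Matrix.one_apply] <;> ring
  rw [hM, rank_eq_one_iff_2x2]
  have hne : (!![1 - x21, x11 + e * x12 - x22; -(e * x21), 1 + x21] : Matrix (Fin 2) (Fin 2) ℂ) ≠ 0 := by
    intro h
    have h1 := congrFun (congrFun h 0) 0
    have h2 := congrFun (congrFun h 1) 1
    simp at h1 h2
    have : (2 : ℂ) = 0 := by linear_combination h1 + h2
    norm_num at this
  simp only [hne, ne_eq, not_false_iff, and_true, Matrix.det_fin_two_of]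
  constructor <;> intro h <;> linear_combination h
end

section
/- Let $\lambda, \varepsilon \in \mathbb{C}$, let $Y = \begin{pmatrix} \lambda & 1 \\ 0 & \lambda + \varepsilon \end{pmatrix}$, and let $X = \begin{pmatrix} x_{11} & x_{12} \\ x_{21} & x_{22} \end{pmatrix}$ satisfy $\varepsilon^2 x_{21} x_{12} - \varepsilon x_{21}(x_{22} - x_{11}) + 1 - x_{21}^2 = 0$. Then there exists an invertible $2 \times 2$ complex matrix $G$ with $G Y G^{-1} = Y$ such that the $(1,2)$-entry of $G X G^{-1}$ equals $0$. -/
/-!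
Take `G = 1 + r • (Y - l • 1) = !![1, r; 0, 1 + r * e]`, which commutes with `Y`. The `(0, 1)`
entry of `G * X * G⁻¹` is a multiple of `x21 * r ^ 2 - (x22 - x11) * r - x12`, so `r` is chosen as a
root of this quadratic; the hypothesis forces `x21 ≠ 0` and makes `G` invertible at every root.
-/

namespace Matrix

variable {K : Type*} [Field K]

theorem isUnit_of_fin_two_upper {r d : K} (hd : d ≠ 0) : IsUnit !![1, r; 0, d] := by
  simpa [isUnit_iff_isUnit_det, det_fin_two_of] using hd

theorem commute_fin_two_upper (l e r : K) :
    Commute !![1, r; 0, 1 + r * e] !![l, 1; 0, l + e] := by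
  ext i j
  fin_cases i <;> fin_cases j <;> simp <;> ring

theorem fin_two_upper_conj_apply_zero_one (X : Matrix (Fin 2) (Fin 2) K) (r d : K) :
    (!![1, r; 0, d] * X * !![1, r; 0, d]⁻¹) 0 1 =
      d⁻¹ * (X 0 1 + r * (X 1 1 - X 0 0) - r ^ 2 * X 1 0) := by
  rw [inv_def, det_fin_two_of, adjugate_fin_two_of, Ring.inverse_eq_inv']
  simp [mul_apply, vecMul, dotProduct, Fin.sum_univ_two]
  ring

end Matrix

open Matrix in
theorem canonical_representative_with_zero_entry
    (l e x11 x12 x21 x22 : ℂ)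
    (h : e ^ 2 * x21 * x12 - e * x21 * (x22 - x11) + 1 - x21 ^ 2 = 0)
    (Y X : Matrix (Fin 2) (Fin 2) ℂ)
    (hY : Y = !![l, 1; 0, l + e]) (hX : X = !![x11, x12; x21, x22]) :
    ∃ G : Matrix (Fin 2) (Fin 2) ℂ, IsUnit G ∧ G * Y * G⁻¹ = Y ∧
      (G * X * G⁻¹) 0 1 = 0 := by
  subst hY hX
  have hx21 : x21 ≠ 0 := by
    rintro rfl
    simp at h
  obtain ⟨r, hr⟩ : ∃ r, x21 * (r * r) + -(x22 - x11) * r + -x12 = 0 :=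
    exists_quadratic_eq_zero hx21 (IsAlgClosed.exists_eq_mul_self _)
  -- `h` says that `x21 * e ^ 2 * q (-1 / e) = 1` for the quadratic `q` of which `r` is a root.
  have hd : 1 + r * e ≠ 0 := by
    intro hd
    refine one_ne_zero (α := ℂ) ?_
    linear_combination h + e ^ 2 * x21 * hr - (x21 ^ 2 * (e * r - 1) - x21 * e * (x22 - x11)) * hd
  refine ⟨!![1, r; 0, 1 + r * e], isUnit_of_fin_two_upper hd, ?_, ?_⟩
  · rw [(commute_fin_two_upper l e r).eq,
      mul_nonsing_inv_cancel_right _ _ ((isUnit_iff_isUnit_det _).mp (isUnit_of_fin_two_upper hd))]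
  · rw [fin_two_upper_conj_apply_zero_one]
    simp only [of_apply, cons_val', cons_val_zero, cons_val_one, empty_val', cons_val_fin_one]
    linear_combination -(1 + r * e)⁻¹ * hr
end

section
/- Let $\lambda, \varepsilon, x_{11}, x_{21}, x_{22} \in \mathbb{C}$, set $\delta = x_{22} - x_{11}$, assume $x_{21}(x_{21} + \varepsilon \delta) = 1$, and let $Y = \begin{pmatrix} \lambda & 1 \\ 0 & \lambda + \varepsilon \end{pmatrix}$, $X = \begin{pmatrix} x_{11} & 0 \\ x_{21} & x_{22} \end{pmatrix}$, and $G = \begin{pmatrix} x_{21} & \delta \\ 0 & \varepsilon \delta + x_{21} \end{pmatrix}$. Then $G$ is invertible with $\det G = 1$, $G Y G^{-1} = Y$, and $G X G^{-1} = \begin{pmatrix} x_{22} & 0 \\ \varepsilon(x_{22} - x_{11}) + x_{21} & x_{11} \end{pmatrix}$. -/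
theorem first_Z2_identification
    (l e x11 x21 x22 d : ℂ) (hd : d = x22 - x11)
    (h : x21 * (x21 + e * d) = 1)
    (Y X G : Matrix (Fin 2) (Fin 2) ℂ)
    (hY : Y = !![l, 1; 0, l + e]) (hX : X = !![x11, 0; x21, x22])
    (hG : G = !![x21, d; 0, e * d + x21]) :
    G.det = 1 ∧ IsUnit G ∧ G * Y * G⁻¹ = Y ∧
      G * X * G⁻¹ = !![x22, 0; e * (x22 - x11) + x21, x11] := by
  have hdet : G.det = 1 := by
    subst hG
    simp [Matrix.det_fin_two_of]
    linear_combination h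
  have hunit : IsUnit G := by
    rw [Matrix.isUnit_iff_isUnit_det, hdet]; exact isUnit_one
  have hmul : G * G⁻¹ = 1 := Matrix.mul_nonsing_inv G (by simp [hdet])
  refine ⟨hdet, hunit, ?_, ?_⟩
  · have : G * Y = Y * G := by
      subst hY hG
      ext i j
      fin_cases i <;> fin_cases j <;>
        simp [Matrix.mul_apply, Fin.sum_univ_succ] <;> ring
    calc G * Y * G⁻¹ = Y * G * G⁻¹ := by rw [this]
      _ = Y := by rw [mul_assoc, hmul, mul_one]
  · have : G * X = !![x22, 0; e * (x22 - x11) + x21, x11] * G := by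
      subst hX hG hd
      ext i j
      fin_cases i <;> fin_cases j <;>
        simp [Matrix.mul_apply, Fin.sum_univ_succ] <;>
        first | ring | linear_combination (x11 - x22) * h | linear_combination (x22 - x11) * h
    calc G * X * G⁻¹ = !![x22, 0; e * (x22 - x11) + x21, x11] * G * G⁻¹ := by rw [this]
      _ = _ := by rw [mul_assoc, hmul, mul_one]
end

section
/- Define maps $\sigma_1, \sigma_2 : \mathbb{C}^5 \to \mathbb{C}^5$ by $\sigma_1(\lambda, \varepsilon, x_{11}, x_{21}, \delta) = (\lambda, \varepsilon, x_{11} + \delta, x_{21} + \varepsilon\delta, -\delta)$ and $\sigma_2(\lambda, \varepsilon, x_{11}, x_{21}, \delta) = (\lambda + \varepsilon, -\varepsilon, x_{11}, x_{21} + \varepsilon\delta, \delta)$. Then $\sigma_1 \circ \sigma_1 = \mathrm{id}$, $\sigma_2 \circ \sigma_2 = \mathrm{id}$, $\sigma_1 \circ \sigma_2 = \sigma_2 \circ \sigma_1$, and both $\sigma_1$ and $\sigma_2$ map the set $\widehat{\mathcal{C}_2} = \{(\lambda, \varepsilon, x_{11}, x_{21}, \delta) \in \mathbb{C}^5 : x_{21}^2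 + \varepsilon \delta x_{21} - 1 = 0\}$ to itself. (Thus $\sigma_1, \sigma_2$ generate a $\mathbb{Z}_2 \times \mathbb{Z}_2$-action on $\widehat{\mathcal{C}_2}$.) -/
/-- The first `ℤ₂`-identification on `ℂ⁵`:
`(λ, ε, x₁₁, x₂₁, δ) ↦ (λ, ε, x₁₁ + δ, x₂₁ + εδ, -δ)`. -/
def sigma1 : ℂ × ℂ × ℂ × ℂ × ℂ → ℂ × ℂ × ℂ × ℂ × ℂ
  | (l, e, x11, x21, d) => (l, e, x11 + d, x21 + e * d, -d)

/-- The second `ℤ₂`-identification on `ℂ⁵`: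
`(λ, ε, x₁₁, x₂₁, δ) ↦ (λ + ε, -ε, x₁₁, x₂₁ + εδ, δ)`. -/
def sigma2 : ℂ × ℂ × ℂ × ℂ × ℂ → ℂ × ℂ × ℂ × ℂ × ℂ
  | (l, e, x11, x21, d) => (l + e, -e, x11, x21 + e * d, d)

/-- The fourfold cover `Ĉ₂ = {(λ, ε, x₁₁, x₂₁, δ) ∈ ℂ⁵ : x₂₁² + εδx₂₁ - 1 = 0}`. -/
def CMhat2 : Set (ℂ × ℂ × ℂ × ℂ × ℂ) :=
  {p | p.2.2.2.1 ^ 2 + p.2.1 * p.2.2.2.2 * p.2.2.2.1 - 1 = 0}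

theorem Z2_times_Z2_action_on_cover :
    sigma1 ∘ sigma1 = id ∧ sigma2 ∘ sigma2 = id ∧ sigma1 ∘ sigma2 = sigma2 ∘ sigma1 ∧
    Set.MapsTo sigma1 CMhat2 CMhat2 ∧ Set.MapsTo sigma2 CMhat2 CMhat2 := by
  refine ⟨funext fun ⟨l, e, x11, x21, d⟩ => ?_,
    funext fun ⟨l, e, x11, x21, d⟩ => ?_,
    funext fun ⟨l, e, x11, x21, d⟩ => ?_,
    fun ⟨l, e, x11, x21, d⟩ h => ?_,
    fun ⟨l, e, x11, x21, d⟩ h => ?_⟩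
  · simp [sigma1]
  · simp [sigma2]
  · simp [sigma1, sigma2]
  · simp only [CMhat2, Set.mem_setOf_eq, sigma1] at h ⊢
    linear_combination h
  · simp only [CMhat2, Set.mem_setOf_eq, sigma2] at h ⊢
    linear_combination h
end
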